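/- arXiv:1908.08791 — 4 statements merged into one kernel-verified Lean document; each statement's English description precedes it below -/
import Mathlib

section
/- For a fixed non-increasing, non-negative, non-zero sequence λ ∈ ℝ^p, the function J_λ(b) = Σ_{i=1}^p λ_i |b|_{(i)}, where |b|_{(1)} ≥ ... ≥ |b|_{(p)} are the sorted magnitudes of the entries of b, satisfies the triangle inequality: J_λ(x + y) ≤ J_λ(x) + J_λ(y) for all x, y ∈ ℝ^p. -/
/-- The `i`-th largest absolute value of the coordinates of `b : Fin p → ℝ`
(`i = 0` corresponds to the largest). -/
noncomputable def sortedAbs {p : ℕ} (b : Fin p → ℝ) (i : Fin p) : ℝ :=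
  |b (Tuple.sort (fun j => |b j|) i.rev)|

/-- The sorted-ℓ¹ norm `J_λ(b) = ∑ λᵢ |b|₍ᵢ₎`. -/
noncomputable def Jlam {p : ℕ} (lam : Fin p → ℝ) (b : Fin p → ℝ) : ℝ :=
  ∑ i, lam i * sortedAbs b i

namespace JlamAux

variable {p : ℕ}

noncomputable def perm (b : Fin p → ℝ) : Equiv.Perm (Fin p) :=
  (Fin.revPerm).trans (Tuple.sort (fun j => |b j|))

lemma sortedAbs_eq (b : Fin p → ℝ) (i : Fin p) :
    sortedAbs b i = |b (perm b i)| := rfl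

lemma sortedAbs_antitone (b : Fin p → ℝ) : Antitone (sortedAbs b) := by
  intro i j hij
  have h := Tuple.monotone_sort (fun j => |b j|) (Fin.rev_le_rev.mpr hij)
  simpa [sortedAbs_eq, perm] using h

noncomputable def topk (b : Fin p → ℝ) (k : ℕ) : ℝ :=
  ∑ i ∈ Finset.univ.filter (fun i : Fin p => (i : ℕ) < k), sortedAbs b i

lemma le_val_strictMono {k : ℕ} (f : Fin k → Fin p) (hf : StrictMono f) :
    ∀ n (h : n < k), n ≤ (f ⟨n, h⟩ : ℕ) := by
  intro n
  induction n with
  | zero => intro h; exact Nat.zero_le _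
  | succ m ih =>
    intro h
    have hm : m < k := Nat.lt_of_succ_lt h
    have hlt : (f ⟨m, hm⟩ : ℕ) < (f ⟨m+1, h⟩ : ℕ) := hf (by simp [Fin.lt_def])
    have := ih hm
    omega

lemma filter_eq_map {k : ℕ} (hkp : (k : ℕ) ≤ p) :
    Finset.univ.filter (fun i : Fin p => (i : ℕ) < k)
      = Finset.univ.map (Fin.castLEEmb hkp) := by
  ext i
  simp only [Finset.mem_filter, Finset.mem_univ, true_and, Finset.mem_map,
    Fin.castLEEmb_apply]
  constructor
  · intro h; exact ⟨⟨(i : ℕ), h⟩, by simp [Fin.ext_iff]⟩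
  · rintro ⟨j, rfl⟩; simpa using j.isLt

lemma topk_eq_fin {k : ℕ} (b : Fin p → ℝ) (hkp : k ≤ p) :
    topk b k = ∑ j : Fin k, sortedAbs b (Fin.castLE hkp j) := by
  rw [topk, filter_eq_map hkp, Finset.sum_map]
  rfl

/-- any T-subset sum of |b| is at most topk b T.card. -/
lemma sum_subset_le_topk (b : Fin p → ℝ) (T : Finset (Fin p)) :
    ∑ j ∈ T, |b j| ≤ topk b T.card := by
  classical
  set k := T.card with hk
  have hkp : k ≤ p := by simpa using T.card_le_univ
  set e := perm b with he
  have h1 : ∑ j ∈ T, |b j| = ∑ i ∈ T.image e.symm, sortedAbs b i := by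
    rw [Finset.sum_image (fun a _ b _ h => e.symm.injective h)]
    refine Finset.sum_congr rfl fun j hj => ?_
    rw [sortedAbs_eq, ← he, Equiv.apply_symm_apply]
  rw [h1]
  set S := T.image e.symm with hS
  have hScard : S.card = k := by
    rw [hS, hk, Finset.card_image_of_injective _ e.symm.injective]
  have h2 : ∑ i ∈ S, sortedAbs b i
      = ∑ j : Fin k, sortedAbs b ((S.orderIsoOfFin hScard j : Fin p)) := by
    rw [← Finset.sum_attach S (fun i => sortedAbs b i)]
    exact (Fintype.sum_equiv (S.orderIsoOfFin hScard).toEquiv _ _ (fun j => rfl)).symm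
  rw [h2, topk_eq_fin b hkp]
  apply Finset.sum_le_sum
  intro j _
  apply sortedAbs_antitone
  have hsm : StrictMono (fun j : Fin k => ((S.orderIsoOfFin hScard j : Fin p))) := by
    intro a c hac
    exact (S.orderIsoOfFin hScard).strictMono hac
  have := le_val_strictMono _ hsm (j : ℕ) j.isLt
  simpa [Fin.le_def, Fin.ext_iff] using this

/-- topk b k equals a sum of |b| over the image of the initial segment. -/
lemma topk_eq_sum_image (b : Fin p → ℝ) {k : ℕ} (hkp : k ≤ p) :
    topk b k = ∑ j ∈ (Finset.univ.filter (fun i : Fin p => (i : ℕ) < k)).image (perm b), |b j| := by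
  rw [Finset.sum_image (fun a _ c _ h => (perm b).injective h), topk]
  rfl

lemma card_image_filter (b : Fin p → ℝ) {k : ℕ} (hkp : k ≤ p) :
    ((Finset.univ.filter (fun i : Fin p => (i : ℕ) < k)).image (perm b)).card = k := by
  rw [Finset.card_image_of_injective _ (perm b).injective, filter_eq_map hkp]
  simp

lemma topk_subadd (x y : Fin p → ℝ) {k : ℕ} (hkp : k ≤ p) :
    topk (x + y) k ≤ topk x k + topk y k := by
  classical
  set S := (Finset.univ.filter (fun i : Fin p => (i : ℕ) < k)).image (perm (x + y)) with hS
  have h1 : topk (x + y) k = ∑ j ∈ S, |(x + y) j| := topk_eq_sum_image _ hkp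
  have hcard : S.card = k := card_image_filter _ hkp
  calc topk (x + y) k = ∑ j ∈ S, |(x + y) j| := h1
    _ ≤ ∑ j ∈ S, (|x j| + |y j|) := Finset.sum_le_sum fun j _ => abs_add_le _ _
    _ = (∑ j ∈ S, |x j|) + ∑ j ∈ S, |y j| := Finset.sum_add_distrib
    _ ≤ topk x k + topk y k := by
        have hx := sum_subset_le_topk x S
        have hy := sum_subset_le_topk y S
        rw [hcard] at hx hy
        linarith

noncomputable def g (lam : Fin p → ℝ) (n : ℕ) : ℝ :=
  if h : n < p then lam ⟨n, h⟩ else 0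

noncomputable def mu (lam : Fin p → ℝ) (n : ℕ) : ℝ := g lam n - g lam (n + 1)

lemma mu_nonneg (lam : Fin p → ℝ) (hmono : ∀ i j : Fin p, i ≤ j → lam j ≤ lam i)
    (hnonneg : ∀ i, 0 ≤ lam i) (n : ℕ) (hn : n < p) : 0 ≤ mu lam n := by
  unfold mu g
  rw [dif_pos hn]
  by_cases h : n + 1 < p
  · rw [dif_pos h]
    have := hmono ⟨n, hn⟩ ⟨n+1, h⟩ (by simp [Fin.le_def])
    linarith
  · rw [dif_neg h]
    simpa using hnonneg ⟨n, hn⟩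

lemma sum_mu_Ico (lam : Fin p → ℝ) (i : ℕ) (hi : i ≤ p) :
    ∑ k ∈ Finset.Ico i p, mu lam k = g lam i := by
  have h1 : ∑ k ∈ Finset.Ico i p, mu lam k
      = ∑ j ∈ Finset.range (p - i), mu lam (i + j) := by
    rw [Finset.sum_Ico_eq_sum_range]
  have h2 : ∑ j ∈ Finset.range (p - i), (g lam (i + j) - g lam (i + j + 1))
      = g lam (i + 0) - g lam (i + (p - i)) := by
    exact Finset.sum_range_sub' (fun j => g lam (i + j)) (p - i)
  have h3 : g lam (i + (p - i)) = 0 := by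
    have : i + (p - i) = p := by omega
    rw [this]; unfold g; rw [dif_neg (lt_irrefl p)]
  rw [h1]
  simp only [mu] at *
  rw [h2, h3]
  simp

lemma Jlam_eq_sum_mu (lam : Fin p → ℝ) (b : Fin p → ℝ) :
    Jlam lam b = ∑ k ∈ Finset.range p, mu lam k * topk b (k + 1) := by
  classical
  have hlam : ∀ i : Fin p, lam i = ∑ k ∈ Finset.Ico (i : ℕ) p, mu lam k := by
    intro i
    rw [sum_mu_Ico lam i (le_of_lt i.isLt)]
    unfold g
    rw [dif_pos i.isLt]
  have h1 : Jlam lam b = ∑ i : Fin p, ∑ k ∈ Finset.range p,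
      (if (i : ℕ) ≤ k then mu lam k * sortedAbs b i else 0) := by
    unfold Jlam
    refine Finset.sum_congr rfl fun i _ => ?_
    rw [hlam i, Finset.sum_mul, ← Finset.sum_filter]
    have : Finset.Ico (i : ℕ) p = (Finset.range p).filter (fun k => (i : ℕ) ≤ k) := by
      ext k; simp [Finset.mem_Ico, Finset.mem_range, Finset.mem_filter, and_comm]
    rw [this]
  rw [h1, Finset.sum_comm]
  refine Finset.sum_congr rfl fun k _ => ?_
  rw [← Finset.sum_filter, topk, Finset.mul_sum]
  have : (Finset.univ.filter (fun i : Fin p => (i : ℕ) ≤ k))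
      = Finset.univ.filter (fun i : Fin p => (i : ℕ) < k + 1) := by
    ext i; simp [Nat.lt_succ_iff]
  rw [this]

end JlamAux

/-- triangle inequality for the sorted-ℓ¹ norm. -/
theorem Jlam_triangle {p : ℕ} (lam : Fin p → ℝ)
    (hmono : ∀ i j : Fin p, i ≤ j → lam j ≤ lam i)
    (hnonneg : ∀ i, 0 ≤ lam i) (hne : lam ≠ 0)
    (x y : Fin p → ℝ) :
    Jlam lam (x + y) ≤ Jlam lam x + Jlam lam y := by
  rw [JlamAux.Jlam_eq_sum_mu lam (x + y), JlamAux.Jlam_eq_sum_mu lam x,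
    JlamAux.Jlam_eq_sum_mu lam y, ← Finset.sum_add_distrib]
  refine Finset.sum_le_sum fun k hk => ?_
  have hkp : k + 1 ≤ p := Finset.mem_range.mp hk
  have hmu := JlamAux.mu_nonneg lam hmono hnonneg k (Finset.mem_range.mp hk)
  have htop := JlamAux.topk_subadd x y hkp
  nlinarith [htop, hmu]
end

section
/- For a fixed non-increasing, non-negative sequence λ ∈ ℝ^p that is not identically zero, the function J_λ(b) = Σ_{i=1}^p λ_i |b|_{(i)} is a norm on ℝ^p: it is absolutely homogeneous, vanishes only at 0, and satisfies the triangle inequality. -/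
section SortedAbs

variable {p : ℕ}

noncomputable def sortedAbsPerm (b : Fin p → ℝ) : Equiv.Perm (Fin p) :=
  Fin.revPerm.trans (Tuple.sort fun j => |b j|)

theorem sortedAbs_eq_abs_sortedAbsPerm (b : Fin p → ℝ) (i : Fin p) :
    sortedAbs b i = |b (sortedAbsPerm b i)| := rfl

theorem sortedAbs_antitone (b : Fin p → ℝ) : Antitone (sortedAbs b) :=
  fun _ _ hij => Tuple.monotone_sort (fun j => |b j|) (Fin.rev_le_rev.mpr hij)

theorem abs_le_sortedAbs_zero (hp : 0 < p) (b : Fin p → ℝ) (j : Fin p) :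
    |b j| ≤ sortedAbs b ⟨0, hp⟩ := by
  have hj : |b j| = sortedAbs b ((sortedAbsPerm b).symm j) := by
    rw [sortedAbs_eq_abs_sortedAbsPerm, Equiv.apply_symm_apply]
  exact hj ▸ sortedAbs_antitone b (Nat.zero_le _)

theorem sortedAbs_smul (a : ℝ) (b : Fin p → ℝ) (i : Fin p) :
    sortedAbs (a • b) i = |a| * sortedAbs b i := by
  set f : Fin p → ℝ := fun j => |b j|
  set g : Fin p → ℝ := fun j => |a| * f j
  -- sorting `f` also sorts `g = |a| • f`, so both sortings give the same sorted values
  have hsort : g ∘ Tuple.sort f = g ∘ Tuple.sort g :=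
    Tuple.comp_sort_eq_comp_iff_monotone.mpr fun _ _ h =>
      mul_le_mul_of_nonneg_left (Tuple.monotone_sort f h) (abs_nonneg a)
  calc sortedAbs (a • b) i = (g ∘ Tuple.sort g) i.rev := by
        simp [sortedAbs, g, f, abs_mul]
    _ = |a| * sortedAbs b i := by
        rw [← hsort]
        rfl

end SortedAbs

section Jlam

variable {p : ℕ} {lam : Fin p → ℝ}

theorem Jlam_eq_sum_sortedAbsPerm (lam b : Fin p → ℝ) :
    Jlam lam b = ∑ i, lam i * |b (sortedAbsPerm b i)| := rfl

theorem Jlam_smul (lam : Fin p → ℝ) (a : ℝ) (b : Fin p → ℝ) :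
    Jlam lam (a • b) = |a| * Jlam lam b := by
  simp only [Jlam, sortedAbs_smul, Finset.mul_sum, mul_left_comm]

theorem sum_mul_abs_comp_perm_le_Jlam (hmono : ∀ i j : Fin p, i ≤ j → lam j ≤ lam i)
    (b : Fin p → ℝ) (σ : Equiv.Perm (Fin p)) :
    ∑ i, lam i * |b (σ i)| ≤ Jlam lam b := by
  have hmv : Monovary lam (sortedAbs b) := fun i j hij =>
    hmono j i (lt_of_not_ge fun hji => hij.not_ge (sortedAbs_antitone b hji)).le
  set π := σ.trans (sortedAbsPerm b).symm
  have hπ : ∀ i, |b (σ i)| = sortedAbs b (π i) := fun i => by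
    simp [π, sortedAbs_eq_abs_sortedAbsPerm]
  calc ∑ i, lam i * |b (σ i)| = ∑ i, lam i • sortedAbs b (π i) := by
        simp only [hπ, smul_eq_mul]
    _ ≤ ∑ i, lam i • sortedAbs b i := hmv.sum_smul_comp_perm_le_sum_smul
    _ = Jlam lam b := rfl

theorem Jlam_add_le (hmono : ∀ i j : Fin p, i ≤ j → lam j ≤ lam i)
    (hnonneg : ∀ i, 0 ≤ lam i) (x y : Fin p → ℝ) :
    Jlam lam (x + y) ≤ Jlam lam x + Jlam lam y := by
  set ρ := sortedAbsPerm (x + y)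
  calc Jlam lam (x + y) = ∑ i, lam i * |x (ρ i) + y (ρ i)| := Jlam_eq_sum_sortedAbsPerm lam _
    _ ≤ ∑ i, lam i * (|x (ρ i)| + |y (ρ i)|) :=
        Finset.sum_le_sum fun i _ => mul_le_mul_of_nonneg_left (abs_add_le _ _) (hnonneg i)
    _ = ∑ i, lam i * |x (ρ i)| + ∑ i, lam i * |y (ρ i)| := by
        simp only [mul_add, Finset.sum_add_distrib]
    _ ≤ Jlam lam x + Jlam lam y :=
        add_le_add (sum_mul_abs_comp_perm_le_Jlam hmono x ρ)
          (sum_mul_abs_comp_perm_le_Jlam hmono y ρ)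

theorem mul_abs_le_Jlam (hp : 0 < p) (hnonneg : ∀ i, 0 ≤ lam i) (b : Fin p → ℝ) (j : Fin p) :
    lam ⟨0, hp⟩ * |b j| ≤ Jlam lam b :=
  calc lam ⟨0, hp⟩ * |b j| ≤ lam ⟨0, hp⟩ * sortedAbs b ⟨0, hp⟩ :=
        mul_le_mul_of_nonneg_left (abs_le_sortedAbs_zero hp b j) (hnonneg _)
    _ ≤ Jlam lam b :=
        Finset.single_le_sum (f := fun i => lam i * sortedAbs b i)
          (fun i _ => mul_nonneg (hnonneg i) (abs_nonneg _)) (Finset.mem_univ _)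

theorem Jlam_zero (lam : Fin p → ℝ) : Jlam lam 0 = 0 := by
  simp [Jlam, sortedAbs]

theorem Jlam_eq_zero_iff (hp : 0 < p) (hnonneg : ∀ i, 0 ≤ lam i) (hpos : 0 < lam ⟨0, hp⟩)
    (b : Fin p → ℝ) : Jlam lam b = 0 ↔ b = 0 := by
  refine ⟨fun hb => funext fun j => ?_, fun hb => hb ▸ Jlam_zero lam⟩
  have hj : lam ⟨0, hp⟩ * |b j| ≤ 0 := hb ▸ mul_abs_le_Jlam hp hnonneg b j
  exact abs_nonpos_iff.mp (nonpos_of_mul_nonpos_right hj hpos)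

end Jlam

/-- `J_λ` is a norm on `ℝ^p`: absolute homogeneity, it vanishes
exactly at `0`, and the triangle inequality. -/
theorem Jlam_is_norm {p : ℕ} (hp : 0 < p) (lam : Fin p → ℝ)
    (hmono : ∀ i j : Fin p, i ≤ j → lam j ≤ lam i)
    (hnonneg : ∀ i, 0 ≤ lam i) (hpos : 0 < lam ⟨0, hp⟩) :
    (∀ (a : ℝ) (b : Fin p → ℝ), Jlam lam (a • b) = |a| * Jlam lam b) ∧
    (∀ b : Fin p → ℝ, Jlam lam b = 0 ↔ b = 0) ∧
    (∀ x y : Fin p → ℝ, Jlam lam (x + y) ≤ Jlam lam x + Jlam lam y) :=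
  ⟨Jlam_smul lam, Jlam_eq_zero_iff hp hnonneg hpos, Jlam_add_le hmono hnonneg⟩
end

section
/- Consider the minimizer b̂ of f(b) = l(b) + Σ_{i=1}^p λ_i |b|_{(i)} with l convex and differentiable, λ_1 ≥ ... ≥ λ_p ≥ 0, and let r be the number of nonzero entries of b̂. Then for every index i with b̂_i = 0 one has |U_i(b̂)| ≤ λ_{r+1}, where U(b) = −∇l(b). -/
/-- `|b|₍ᵢ₎` with 1-based indexing `i ∈ {1,…,p}` (and `0` outside this range). -/
noncomputable def sAbs {p : ℕ} (b : Fin p → ℝ) (i : ℕ) : ℝ :=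
  if h : 1 ≤ i ∧ i ≤ p then sortedAbs b ⟨i - 1, by omega⟩ else 0

open Finset in
lemma slope_aux_mono_zero_prefix {p : ℕ} (h : Fin p → ℝ) (hm : Monotone h)
    (hn : ∀ k, 0 ≤ h k)
    (c : ℕ) (hc : c = (univ.filter (fun k => h k = 0)).card) (k : Fin p) :
    h k = 0 ↔ (k : ℕ) < c := by
  constructor
  · intro hk
    have hsub : Finset.Iic k ⊆ univ.filter (fun j => h j = 0) := by
      intro j hj
      simp only [Finset.mem_Iic] at hj
      simp only [Finset.mem_filter, Finset.mem_univ, true_and]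
      exact le_antisymm (hk ▸ hm hj) (hn j)
    have h1 := Finset.card_le_card hsub
    rw [Fin.card_Iic] at h1
    omega
  · intro hk
    by_contra hne
    have hpos : 0 < h k := lt_of_le_of_ne (hn k) (Ne.symm hne)
    have hsub : univ.filter (fun j => h j = 0) ⊆ Finset.Iio k := by
      intro j hj
      simp only [Finset.mem_filter, Finset.mem_univ, true_and] at hj
      simp only [Finset.mem_Iio]
      by_contra hjk
      push_neg at hjk
      have := hm hjk
      rw [hj] at this
      linarith
    have h1 := Finset.card_le_card hsub
    rw [Fin.card_Iio] at h1
    omega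

open Finset in
lemma slope_aux_sorted_update {p r : ℕ} (bhat : Fin p → ℝ) (i : Fin p) (hi : bhat i = 0)
    (hr : r = (univ.filter (fun j => bhat j ≠ 0)).card) (hrp : r < p)
    (x : ℝ) (hm : ∀ j, bhat j ≠ 0 → |x| ≤ |bhat j|) :
    (∀ k : Fin p, sortedAbs (Function.update bhat i x) k
      = if (k : ℕ) = r then |x| else sortedAbs bhat k)
    ∧ sortedAbs bhat ⟨r, hrp⟩ = 0 := by
  classical
  set g : Fin p → ℝ := fun j => |bhat j| with hg
  set σ₀ := Tuple.sort g with hσ₀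
  have hgs : Monotone (g ∘ σ₀) := Tuple.monotone_sort g
  have hgn : ∀ k, 0 ≤ (g ∘ σ₀) k := fun k => abs_nonneg _
  have hcard : p - r = (univ.filter (fun k => (g ∘ σ₀) k = 0)).card := by
    have h1 : (univ.filter (fun k => (g ∘ σ₀) k = 0)).card
        = (univ.filter (fun j => g j = 0)).card := by
      apply Finset.card_bij (fun k _ => σ₀ k)
      · intro k hk
        simp only [Finset.mem_filter, Finset.mem_univ, true_and] at hk ⊢
        exact hk
      · intro a ha b hb hab
        exact σ₀.injective hab
      · intro j hj
        refine ⟨σ₀.symm j, ?_, by simp⟩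
        simp only [Finset.mem_filter, Finset.mem_univ, true_and, Function.comp] at hj ⊢
        simpa using hj
    have h2 : (univ.filter (fun j => g j = 0)).card
        = (univ.filter (fun j => ¬ bhat j ≠ 0)).card := by
      congr 1
      apply Finset.filter_congr
      intro j _
      simp [hg, abs_eq_zero]
    have h3 := Finset.card_filter_add_card_filter_not
      (s := (univ : Finset (Fin p))) (p := fun j => bhat j ≠ 0)
    rw [Finset.card_univ, Fintype.card_fin] at h3
    omega
  have hzero : ∀ k : Fin p, (g ∘ σ₀) k = 0 ↔ (k : ℕ) < p - r :=
    slope_aux_mono_zero_prefix _ hgs hgn _ hcard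
  set q : Fin p := σ₀.symm i with hq
  have hqlt : (q : ℕ) < p - r := by
    rw [← hzero]
    simp [hq, hg, hi]
  have hprlt : p - r - 1 < p := by omega
  set e : Fin p := ⟨p - r - 1, hprlt⟩ with he
  set σ₁ : Equiv.Perm (Fin p) := (Equiv.swap q e).trans σ₀ with hσ₁
  set b := Function.update bhat i x with hb
  set h : Fin p → ℝ := fun j => |b j| with hh
  have hhval : ∀ j, h j = if j = i then |x| else g j := by
    intro j
    simp [hh, hb, hg, Function.update_apply]
    split <;> rfl
  have hσ₀q : σ₀ q = i := by simp [hq]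
  have hF : ∀ k : Fin p, (h ∘ σ₁) k = if (k : ℕ) = p - r - 1 then |x| else (g ∘ σ₀) k := by
    intro k
    by_cases hk : k = e
    · subst hk
      simp only [Function.comp, hσ₁, Equiv.trans_apply, Equiv.swap_apply_right, hσ₀q]
      rw [hhval]
      simp [he]
    · have hkv : (k : ℕ) ≠ p - r - 1 := fun hkv => hk (Fin.ext hkv)
      rw [if_neg hkv]
      by_cases hkq : k = q
      · have hqe : q ≠ e := fun hqe => hk (hkq.trans hqe)
        rw [hkq]
        simp only [Function.comp, hσ₁, Equiv.trans_apply, Equiv.swap_apply_left]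
        rw [hhval]
        have hσ₀e : σ₀ e ≠ i := by
          intro hc
          exact hqe (by rw [hq, ← hc]; simp)
        rw [if_neg hσ₀e]
        have h1 : (g ∘ σ₀) e = 0 := (hzero e).mpr (by simp [he]; omega)
        have h2 : (g ∘ σ₀) q = 0 := (hzero q).mpr hqlt
        simpa [Function.comp] using h1.trans h2.symm
      · simp only [Function.comp, hσ₁, Equiv.trans_apply,
          Equiv.swap_apply_of_ne_of_ne hkq hk]
        rw [hhval]
        have : σ₀ k ≠ i := by
          intro hc
          exact hkq (by rw [hq, ← hc]; simp)
        rw [if_neg this]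
  have hmono : Monotone (h ∘ σ₁) := by
    intro k₁ k₂ hle
    rw [hF, hF]
    by_cases h1 : (k₁ : ℕ) = p - r - 1 <;> by_cases h2 : (k₂ : ℕ) = p - r - 1
    · simp [h1, h2]
    · rw [if_pos h1, if_neg h2]
      have hk2 : ¬ ((k₂ : ℕ) < p - r) := by
        have : (k₁ : ℕ) ≤ (k₂ : ℕ) := hle
        omega
      have : (g ∘ σ₀) k₂ ≠ 0 := fun hc => hk2 ((hzero k₂).mp hc)
      have hbne : bhat (σ₀ k₂) ≠ 0 := by
        intro hc
        exact this (by simp [Function.comp, hg, hc])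
      exact hm _ hbne
    · rw [if_neg h1, if_pos h2]
      have : (g ∘ σ₀) k₁ = 0 := (hzero k₁).mpr (by
        have : (k₁ : ℕ) ≤ (k₂ : ℕ) := hle
        omega)
      rw [this]
      exact abs_nonneg x
    · rw [if_neg h1, if_neg h2]
      exact hgs hle
  have hsorted : h ∘ Tuple.sort h = h ∘ σ₁ :=
    (Tuple.comp_sort_eq_comp_iff_monotone.mpr hmono).symm
  have hrev : ∀ k : Fin p, ((k.rev : Fin p) : ℕ) = p - ((k : ℕ) + 1) :=
    fun k => Fin.val_rev k
  have hbase : ∀ k : Fin p, sortedAbs bhat k = (g ∘ σ₀) k.rev := fun k => rfl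
  have hupd : ∀ k : Fin p, sortedAbs b k = (h ∘ σ₁) k.rev := by
    intro k
    have : sortedAbs b k = (h ∘ Tuple.sort h) k.rev := rfl
    rw [this, hsorted]
  constructor
  · intro k
    rw [hupd, hF]
    by_cases hk : (k : ℕ) = r
    · rw [if_pos hk, if_pos]
      rw [hrev]; omega
    · rw [if_neg hk, if_neg, hbase]
      rw [hrev]
      have := k.isLt
      omega
  · rw [hbase]
    apply (hzero _).mpr
    rw [hrev]
    simp
    omega

lemma slope_aux_sum_sAbs {p : ℕ} (lam : ℕ → ℝ) (b : Fin p → ℝ) :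
    ∑ i ∈ Finset.Icc 1 p, lam i * sAbs b i
      = ∑ k : Fin p, lam ((k : ℕ) + 1) * sortedAbs b k := by
  classical
  set F : ℕ → ℝ := fun n => if h : n < p then lam (n + 1) * sortedAbs b ⟨n, h⟩ else 0 with hF
  have hL : ∑ i ∈ Finset.Icc 1 p, lam i * sAbs b i = ∑ n ∈ Finset.range p, F n := by
    rw [show Finset.Icc 1 p = Finset.Ico 1 (p+1) from (Finset.Ico_add_one_right_eq_Icc 1 p).symm,
      Finset.sum_Ico_eq_sum_range]
    simp only [Nat.add_sub_cancel]
    apply Finset.sum_congr rfl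
    intro n hn
    rw [Finset.mem_range] at hn
    rw [hF]
    simp only []
    rw [dif_pos hn, sAbs, dif_pos ⟨by omega, by omega⟩]
    simp only [show 1 + n = n + 1 from by omega, Nat.add_sub_cancel]
  have hR : ∑ k : Fin p, lam ((k : ℕ) + 1) * sortedAbs b k = ∑ n ∈ Finset.range p, F n := by
    rw [← Fin.sum_univ_eq_sum_range]
    apply Finset.sum_congr rfl
    intro k _
    rw [hF]
    simp only []
    rw [dif_pos k.isLt]
  rw [hL, hR]

/-- at a minimizer `b̂` of `l(b) + ∑ λᵢ |b|₍ᵢ₎` with `r` nonzero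
entries (`r < p`), every zero coordinate satisfies `|Uᵢ(b̂)| ≤ λ_{r+1}`,
where `U(b) = -∇l(b)`. -/
theorem slope_score_at_zero {p : ℕ} (l : (Fin p → ℝ) → ℝ)
    (hconv : ConvexOn ℝ Set.univ l) (hdiff : Differentiable ℝ l)
    (lam : ℕ → ℝ)
    (hmono : ∀ i j, 1 ≤ i → i ≤ j → j ≤ p → lam j ≤ lam i)
    (hnonneg : ∀ i, 1 ≤ i → i ≤ p → 0 ≤ lam i)
    (bhat : Fin p → ℝ)
    (hmin : ∀ b, l bhat + ∑ i ∈ Finset.Icc 1 p, lam i * sAbs bhat i ≤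
                 l b + ∑ i ∈ Finset.Icc 1 p, lam i * sAbs b i)
    (r : ℕ) (hr : r = (Finset.univ.filter (fun i => bhat i ≠ 0)).card)
    (hrp : r < p)
    (U : Fin p → ℝ) (hU : ∀ i, U i = -(fderiv ℝ l bhat (Pi.single i 1)))
    (i : Fin p) (hi : bhat i = 0) :
    |U i| ≤ lam (r + 1) := by
  classical
  set D := fderiv ℝ l bhat with hD
  -- a positive lower bound on the nonzero coordinates
  set M : Finset ℝ :=
    insert (1 : ℝ) ((Finset.univ.filter fun j => bhat j ≠ 0).image fun j => |bhat j|) with hM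
  have hMne : M.Nonempty := ⟨1, Finset.mem_insert_self _ _⟩
  set m : ℝ := M.min' hMne with hm
  have hmpos : 0 < m := by
    rw [hm]
    rw [Finset.lt_min'_iff]
    intro y hy
    rw [hM, Finset.mem_insert] at hy
    rcases hy with h | h
    · rw [h]; norm_num
    · rcases Finset.mem_image.mp h with ⟨j, hj, hje⟩
      rw [Finset.mem_filter] at hj
      rw [← hje]
      exact abs_pos.mpr hj.2
  have hmle : ∀ j, bhat j ≠ 0 → m ≤ |bhat j| := by
    intro j hj
    apply Finset.min'_le
    rw [hM]
    exact Finset.mem_insert_of_mem (Finset.mem_image_of_mem _ (by simp [hj]))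
  -- the key directional bound
  have key : ∀ s : ℝ, |s| = 1 → -(lam (r + 1)) ≤ s * D (Pi.single i 1) := by
    intro s hs
    set v : Fin p → ℝ := s • (Pi.single i (1:ℝ) : Fin p → ℝ) with hv
    set φ : ℝ → ℝ := fun t => l (bhat + t • v) with hφ
    have hline : HasDerivAt (fun t : ℝ => bhat + t • v) v 0 := by
      simpa using ((hasDerivAt_id (0 : ℝ)).smul_const v).const_add bhat
    have h0v : bhat + (0 : ℝ) • v = bhat := by simp
    have hder : HasDerivAt φ (D v) 0 := by
      have hl : HasFDerivAt l D (bhat + (0 : ℝ) • v) := h0v.symm ▸ (hdiff bhat).hasFDerivAt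
      exact hl.comp_hasDerivAt 0 hline
    have hslope : ∀ t ∈ Set.Ioo (0 : ℝ) m, -(lam (r + 1)) ≤ slope φ 0 t := by
      intro t ht
      obtain ⟨ht0, htm⟩ := ht
      set b : Fin p → ℝ := Function.update bhat i (t * s) with hbdef
      have habs : |t * s| = t := by
        rw [abs_mul, hs, mul_one, abs_of_pos ht0]
      have hbv : bhat + t • v = b := by
        funext j
        rw [hbdef, Function.update_apply]
        simp only [Pi.add_apply, Pi.smul_apply, smul_eq_mul, hv, Pi.single_apply]
        by_cases hji : j = i
        · rw [if_pos hji, if_pos hji, hji, hi]; ring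
        · rw [if_neg hji, if_neg hji]; ring
      obtain ⟨h1, h2⟩ := slope_aux_sorted_update bhat i hi hr hrp (t * s)
        (fun j hj => by rw [habs]; exact le_of_lt (lt_of_lt_of_le htm (hmle j hj)))
      have hsum_diff : ∑ k : Fin p,
          (lam ((k : ℕ) + 1) * sortedAbs b k - lam ((k : ℕ) + 1) * sortedAbs bhat k)
          = lam (r + 1) * t := by
        rw [Finset.sum_eq_single (⟨r, hrp⟩ : Fin p)]
        · have hrr : (((⟨r, hrp⟩ : Fin p) : ℕ) = r) := rfl
          rw [h1, if_pos hrr, habs, h2]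
          ring
        · intro k _ hk
          rw [h1]
          have : (k : ℕ) ≠ r := fun hc => hk (Fin.ext hc)
          rw [if_neg this]
          ring
        · intro hmem
          exact absurd (Finset.mem_univ _) hmem
      have hsum_b : ∑ i ∈ Finset.Icc 1 p, lam i * sAbs b i
          = (∑ i ∈ Finset.Icc 1 p, lam i * sAbs bhat i) + lam (r + 1) * t := by
        rw [slope_aux_sum_sAbs, slope_aux_sum_sAbs]
        rw [Finset.sum_sub_distrib] at hsum_diff
        linarith
      have hminb := hmin b
      rw [hsum_b] at hminb
      have hlb : l bhat - l b ≤ lam (r + 1) * t := by linarith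
      have hφt : φ t = l b := by rw [hφ]; simp only []; rw [hbv]
      have hφ0 : φ 0 = l bhat := by rw [hφ]; simp only []; rw [h0v]
      rw [slope_def_field, hφt, hφ0, sub_zero, le_div_iff₀ ht0]
      linarith
    have htend : Filter.Tendsto (slope φ 0) (nhdsWithin 0 (Set.Ioi 0)) (nhds (D v)) :=
      (hasDerivAt_iff_tendsto_slope.mp hder).mono_left
        (nhdsWithin_mono _ (fun x hx => Set.mem_compl_singleton_iff.mpr (ne_of_gt hx)))
    have hev : ∀ᶠ t in nhdsWithin (0 : ℝ) (Set.Ioi 0), -(lam (r + 1)) ≤ slope φ 0 t :=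
      Filter.eventually_of_mem (Ioo_mem_nhdsGT_of_mem ⟨le_refl 0, hmpos⟩) hslope
    have := ge_of_tendsto htend hev
    calc -(lam (r + 1)) ≤ D v := this
      _ = s * D (Pi.single i 1) := by
        rw [hv, map_smul, smul_eq_mul]
  have k1 := key 1 (by norm_num)
  have k2 := key (-1) (by norm_num)
  rw [one_mul] at k1
  rw [neg_one_mul] at k2
  rw [hU i]
  rw [abs_le]
  constructor <;> [linarith; linarith]
end

section
/- Let b̂ minimize f(b) = l(b) + Σ_{i=1}^p λ_i |b|_{(i)} with l convex and differentiable and λ_1 ≥ ... ≥ λ_p ≥ 0. If |b̂_j| > |b̂_k|, then |U_j(b̂)| ≥ |U_k(b̂)|, where U(b) = −∇l(b). -/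
/-!
Shrinking the larger coordinate `b̂_j` towards zero by `t |b̂_j|` while moving the smaller one
`b̂_k` by at most the same amount keeps `|b̂_k|` below `|b̂_j|` for small `t`, and then the sorted
`ℓ¹` penalty cannot increase: after sorting the perturbed point, mass has only moved from a
position of larger weight to one of smaller (nonnegative) weight, and the rearrangement
inequality bounds the re-sorted original. Hence along every such direction `l` cannot decrease
at `b̂`, so its directional derivative `b̂_j U_j - a U_k` is nonnegative for all `|a| ≤ |b̂_j|`;
taking `a = ±|b̂_j|` gives `|b̂_j| |U_k| ≤ |b̂_j| |U_j|`.
-/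

open Finset

theorem sAbs_succ {p : ℕ} (b : Fin p → ℝ) (m : Fin p) : sAbs b (m + 1) = sortedAbs b m := by
  rw [sAbs, dif_pos ⟨by omega, m.isLt⟩]
  rfl

theorem sum_Icc_sAbs_eq_sum_sort {p : ℕ} (lam : ℕ → ℝ) (b : Fin p → ℝ) :
    ∑ i ∈ Icc 1 p, lam i * sAbs b i
      = ∑ m : Fin p, lam (p - m) * |b (Tuple.sort (fun j => |b j|) m)| :=
  calc ∑ i ∈ Icc 1 p, lam i * sAbs b i = ∑ m : Fin p, lam (m + 1) * sortedAbs b m := by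
        simp only [← sAbs_succ]
        rw [Fin.sum_univ_eq_sum_range (fun i => lam (i + 1) * sAbs b (i + 1)), range_eq_Ico,
          sum_Ico_add' (fun i => lam i * sAbs b i), zero_add, Ico_add_one_right_eq_Icc]
    _ = ∑ m : Fin p, lam (p - m.rev) * sortedAbs b m :=
        Fintype.sum_congr _ _ fun m => by rw [Fin.val_rev]; congr 2; omega
    _ = _ := Fintype.sum_equiv Fin.revPerm _ _ fun m => by simp [sortedAbs]

theorem sum_mul_comp_perm_le_sum_mul_sort {n : ℕ} {w : Fin n → ℝ} (hw : Monotone w)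
    (f : Fin n → ℝ) (π : Equiv.Perm (Fin n)) :
    ∑ m, w m * f (π m) ≤ ∑ m, w m * f (Tuple.sort f m) := by
  simpa using (hw.monovary (Tuple.monotone_sort f)).sum_mul_comp_perm_le_sum_mul
    (σ := π.trans (Tuple.sort f).symm)

theorem Fintype.sum_mul_le_sum_mul_of_transfer {ι : Type*} [Fintype ι] {u x y : ι → ℝ}
    {j k : ι} (hjk : j ≠ k) (hsame : ∀ i, i ≠ j → i ≠ k → y i = x i)
    (hj : y j ≤ x j) (hsum : y j + y k ≤ x j + x k) (hu0 : 0 ≤ u k) (hu : u k ≤ u j) :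
    ∑ i, u i * y i ≤ ∑ i, u i * x i := by
  have hdiff : ∑ i, (u i * x i - u i * y i) = u j * (x j - y j) + u k * (x k - y k) := by
    rw [Fintype.sum_eq_add j k hjk fun i hi => by rw [hsame i hi.1 hi.2, sub_self]]
    ring
  rw [← sub_nonneg, ← sum_sub_distrib, hdiff]
  rcases le_total (x k) (y k) with h | h
  · nlinarith [mul_le_mul_of_nonneg_right hu (sub_nonneg.2 h)]
  · nlinarith [mul_nonneg hu0 (sub_nonneg.2 h), mul_nonneg (hu0.trans hu) (sub_nonneg.2 hj)]

theorem sum_Icc_sAbs_le_of_transfer {p : ℕ} {lam : ℕ → ℝ}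
    (hmono : ∀ i j, 1 ≤ i → i ≤ j → j ≤ p → lam j ≤ lam i)
    (hnonneg : ∀ i, 1 ≤ i → i ≤ p → 0 ≤ lam i) {b b' : Fin p → ℝ} {j k : Fin p}
    (hsame : ∀ i, i ≠ j → i ≠ k → |b' i| = |b i|) (hj : |b' j| ≤ |b j|)
    (hsum : |b' j| + |b' k| ≤ |b j| + |b k|) (hlt : |b' k| < |b' j|) :
    ∑ i ∈ Icc 1 p, lam i * sAbs b' i ≤ ∑ i ∈ Icc 1 p, lam i * sAbs b i := by
  set w : Fin p → ℝ := fun m => lam (p - m)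
  have hw : Monotone w := fun m m' hmm' => by
    have : (m : ℕ) ≤ m' := hmm'
    exact hmono _ _ (by omega) (by omega) (by omega)
  have hw0 : ∀ m, 0 ≤ w m := fun m => hnonneg _ (by omega) (by omega)
  set σ := Tuple.sort fun i => |b' i|
  have hσ : σ.symm k < σ.symm j :=
    (Tuple.monotone_sort fun i => |b' i|).reflect_lt (by simpa [σ] using hlt)
  rw [sum_Icc_sAbs_eq_sum_sort, sum_Icc_sAbs_eq_sum_sort]
  calc ∑ m, w m * |b' (σ m)| = ∑ i, w (σ.symm i) * |b' i| :=
        Fintype.sum_equiv σ _ _ fun m => by simp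
    _ ≤ ∑ i, w (σ.symm i) * |b i| :=
        Fintype.sum_mul_le_sum_mul_of_transfer (by rintro rfl; exact hlt.false) hsame
          hj hsum (hw0 _) (hw hσ.le)
    _ = ∑ m, w m * |b (σ m)| := (Fintype.sum_equiv σ _ _ fun m => by simp).symm
    _ ≤ _ := sum_mul_comp_perm_le_sum_mul_sort hw (fun i => |b i|) σ

theorem le_fderiv_of_forall_le_add_smul {E : Type*} [NormedAddCommGroup E] [NormedSpace ℝ E]
    {f : E → ℝ} {x v : E} {δ : ℝ} (hf : DifferentiableAt ℝ f x) (hδ : 0 < δ)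
    (hle : ∀ t ∈ Set.Ioo 0 δ, f x ≤ f (x + t • v)) : 0 ≤ fderiv ℝ f x v := by
  have hmin : IsLocalMinOn f {y | f x ≤ f y} x := eventually_nhdsWithin_of_forall fun _ hy => hy
  have hv : v ∈ posTangentConeAt {y | f x ≤ f y} x :=
    mem_posTangentConeAt_of_frequently_mem <| Filter.Eventually.frequently <|
      Filter.mem_of_superset (Ioo_mem_nhdsGT hδ) hle
  exact hmin.hasFDerivWithinAt_nonneg hf.hasFDerivAt.hasFDerivWithinAt hv

theorem sum_Icc_sAbs_add_smul_le {p : ℕ} {lam : ℕ → ℝ}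
    (hmono : ∀ i j, 1 ≤ i → i ≤ j → j ≤ p → lam j ≤ lam i)
    (hnonneg : ∀ i, 1 ≤ i → i ≤ p → 0 ≤ lam i) {b : Fin p → ℝ} {j k : Fin p} {a t : ℝ}
    (ha : |a| ≤ |b j|) (ht0 : 0 ≤ t) (ht : 2 * t * |b j| < |b j| - |b k|) :
    ∑ i ∈ Icc 1 p, lam i * sAbs (b + t • (a • Pi.single k 1 - b j • Pi.single j 1)) i
      ≤ ∑ i ∈ Icc 1 p, lam i * sAbs b i := by
  have hjk : j ≠ k := by
    rintro rfl
    nlinarith [abs_nonneg (b j)]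
  have ht1 : t ≤ 1 := by
    by_contra! h
    nlinarith [abs_nonneg (b k), mul_le_mul_of_nonneg_right h.le (abs_nonneg (b j))]
  set b' := b + t • (a • Pi.single k 1 - b j • Pi.single j 1)
  have hb'j : |b' j| = (1 - t) * |b j| := by
    rw [show b' j = (1 - t) * b j by
        simp only [b', Pi.add_apply, Pi.smul_apply, Pi.sub_apply, smul_eq_mul,
          Pi.single_eq_of_ne hjk, Pi.single_eq_same]
        ring,
      abs_mul,
      abs_of_nonneg (sub_nonneg.2 ht1)]
  have hb'k : |b' k| ≤ |b k| + t * |b j| :=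
    calc |b' k| = |b k + t * a| := by simp [b', hjk.symm]
      _ ≤ |b k| + t * |a| := by simpa [abs_mul, abs_of_nonneg ht0] using abs_add_le (b k) (t * a)
      _ ≤ |b k| + t * |b j| := by gcongr
  refine sum_Icc_sAbs_le_of_transfer hmono hnonneg (j := j) (k := k)
    (fun i hij hik => by simp [b', hij, hik]) ?_ (by linarith) (by linarith)
  nlinarith [abs_nonneg (b j)]

theorem slope_score_monotone_general {p : ℕ} (l : (Fin p → ℝ) → ℝ)
    (hdiff : Differentiable ℝ l)
    (lam : ℕ → ℝ)
    (hmono : ∀ i j, 1 ≤ i → i ≤ j → j ≤ p → lam j ≤ lam i)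
    (hnonneg : ∀ i, 1 ≤ i → i ≤ p → 0 ≤ lam i)
    (bhat : Fin p → ℝ)
    (hmin : ∀ b, l bhat + ∑ i ∈ Finset.Icc 1 p, lam i * sAbs bhat i ≤
                 l b + ∑ i ∈ Finset.Icc 1 p, lam i * sAbs b i)
    (U : Fin p → ℝ) (hU : ∀ i, U i = -(fderiv ℝ l bhat (Pi.single i 1)))
    (j k : Fin p) (hjk : |bhat k| < |bhat j|) :
    |U k| ≤ |U j| := by
  have hpos : 0 < |bhat j| := (abs_nonneg _).trans_lt hjk
  have hδ : 0 < (|bhat j| - |bhat k|) / (2 * |bhat j|) := by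
    apply div_pos <;> linarith
  have key : ∀ a, |a| ≤ |bhat j| → a * U k ≤ |bhat j| * |U j| := by
    intro a ha
    have hd := le_fderiv_of_forall_le_add_smul (hdiff bhat) hδ fun t ht => by
      have ht' := (lt_div_iff₀ (by positivity)).1 ht.2
      linarith [hmin (bhat + t • (a • Pi.single k 1 - bhat j • Pi.single j 1)),
        sum_Icc_sAbs_add_smul_le hmono hnonneg (k := k) ha ht.1.le (by linarith)]
    have hfd : ∀ i, fderiv ℝ l bhat (Pi.single i 1) = -U i := fun i => by rw [hU, neg_neg]
    rw [map_sub, map_smul, map_smul, smul_eq_mul, smul_eq_mul, hfd, hfd] at hd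
    have hUj : bhat j * U j ≤ |bhat j| * |U j| := abs_mul (bhat j) (U j) ▸ le_abs_self _
    linarith
  have habs : |(|bhat j| * U k)| ≤ |bhat j| * |U j| :=
    abs_le.2 ⟨by linarith [key (-|bhat j|) (by rw [abs_neg, abs_abs])], key _ (abs_abs _).le⟩
  rw [abs_mul, abs_abs] at habs
  exact le_of_mul_le_mul_left habs hpos

/-- at a minimizer `b̂` of `l(b) + ∑ λᵢ |b|₍ᵢ₎`, if
`|b̂_j| > |b̂_k|` then `|U_j(b̂)| ≥ |U_k(b̂)|`, where `U(b) = -∇l(b)`. -/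
theorem slope_score_monotone {p : ℕ} (l : (Fin p → ℝ) → ℝ)
    (hconv : ConvexOn ℝ Set.univ l) (hdiff : Differentiable ℝ l)
    (lam : ℕ → ℝ)
    (hmono : ∀ i j, 1 ≤ i → i ≤ j → j ≤ p → lam j ≤ lam i)
    (hnonneg : ∀ i, 1 ≤ i → i ≤ p → 0 ≤ lam i)
    (bhat : Fin p → ℝ)
    (hmin : ∀ b, l bhat + ∑ i ∈ Finset.Icc 1 p, lam i * sAbs bhat i ≤
                 l b + ∑ i ∈ Finset.Icc 1 p, lam i * sAbs b i)
    (U : Fin p → ℝ) (hU : ∀ i, U i = -(fderiv ℝ l bhat (Pi.single i 1)))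
    (j k : Fin p) (hjk : |bhat k| < |bhat j|) :
    |U k| ≤ |U j| :=
  slope_score_monotone_general l hdiff lam hmono hnonneg bhat hmin U hU j k hjk
end
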